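/- Coincident-concatenation corollary of LDCP: Let δ be a finite database of C-sequences and k ≥ 1. For any two coincidences (finite label sets) a and a', the coincident concatenation a ⊕ a' = a ∪ a' satisfies LWU_k(⟨a ∪ a'⟩) ≤ LWU_k(⟨a⟩), where ⟨c⟩ denotes the 1-L-sequence whose only coincidence is c. Hence if ⟨a⟩ is unpromising (LWU_k(⟨a⟩) < ξ), then ⟨a ∪ a'⟩ is also unpromising. -/

import Mathlib

open scoped Classical

variable {α : Type*}

/-- C-eventset containment: `(c, λ) ⊑ (c', λ')` iff `c ⊆ c'` and `λ = λ'`. -/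
def EsetSub (σ τ : Finset α × ℕ) : Prop := σ.1 ⊆ τ.1 ∧ σ.2 = τ.2

/-- C-sequence containment: `C ⊑ C'` iff there are strictly increasing indices
`j_1 < … < j_n` into `C'` with `σ_k ⊑ σ'_{j_k}` for all `k`. -/
def CSub (C C' : List (Finset α × ℕ)) : Prop :=
  ∃ D : List (Finset α × ℕ), D.Sublist C' ∧ List.Forall₂ EsetSub C D

/-- `C ∼ L` : the C-sequence `C` matches the L-sequence `L`. -/
def Matches (C : List (Finset α × ℕ)) (L : List (Finset α)) : Prop :=
  C.map Prod.fst = L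

/-- `L` is a sub-L-sequence of `L'`. -/
def LSub (L L' : List (Finset α)) : Prop :=
  ∃ M : List (Finset α), M.Sublist L' ∧ List.Forall₂ (fun a b => a ⊆ b) L M

/-- Utility of a C-eventset: `u_e (c, λ) = λ · Σ_{l ∈ c} p l`. -/
noncomputable def ue (p : α → ℝ) (σ : Finset α × ℕ) : ℝ := (σ.2 : ℝ) * ∑ l ∈ σ.1, p l

/-- Utility of a C-sequence: sum of the utilities of its C-eventsets. -/
noncomputable def us (p : α → ℝ) (C : List (Finset α × ℕ)) : ℝ := (C.map (ue p)).sum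

/-- `u_maxk (C, k)`: the maximum utility of at most `k` C-eventsets in `C`. -/
noncomputable def umaxk (p : α → ℝ) (C : List (Finset α × ℕ)) (k : ℕ) : ℝ :=
  sSup { x : ℝ | ∃ C'', CSub C'' C ∧ C''.length ≤ k ∧ x = us p C'' }

/-- `LWU_k(L)`: the L-sequence-weighted utilization of `L` w.r.t. maximum length `k`. -/
noncomputable def LWU (p : α → ℝ) (δ : Finset (List (Finset α × ℕ))) (k : ℕ)
    (L : List (Finset α)) : ℝ :=
  ∑ C ∈ δ, if ∃ C', CSub C' C ∧ Matches C' L then umaxk p C k else 0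

/-- `u_max(L)`: the maximum utility of the L-sequence `L` in the database `δ`. -/
noncomputable def umax (p : α → ℝ) (δ : Finset (List (Finset α × ℕ)))
    (L : List (Finset α)) : ℝ :=
  ∑ C ∈ δ, sSup ({ x : ℝ | ∃ C', CSub C' C ∧ Matches C' L ∧ x = us p C' } ∪ {0})

/-! A C-sequence contains a C-subsequence matching `L` exactly when `L` is pointwise `⊆` a
subsequence of its coincidences. Since that relation is transitive, `LWU_k` is antitone in `L`
for the L-subsequence order, and `⟨a⟩` is an L-subsequence of `⟨a ∪ a'⟩`. -/

lemma us_nonneg {p : α → ℝ} (hp : ∀ l, 0 ≤ p l) (C : List (Finset α × ℕ)) : 0 ≤ us p C :=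
  List.sum_nonneg <| by
    simp only [List.mem_map]
    rintro _ ⟨σ, -, rfl⟩
    exact mul_nonneg σ.2.cast_nonneg (Finset.sum_nonneg fun l _ => hp l)

lemma umaxk_nonneg {p : α → ℝ} (hp : ∀ l, 0 ≤ p l) (C : List (Finset α × ℕ)) (k : ℕ) :
    0 ≤ umaxk p C k :=
  Real.sSup_nonneg <| by
    rintro _ ⟨C'', -, -, rfl⟩
    exact us_nonneg hp C''

lemma lsub_iff_sublistForall₂ {L L' : List (Finset α)} :
    LSub L L' ↔ List.SublistForall₂ (· ⊆ ·) L L' := by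
  rw [List.sublistForall₂_iff, LSub]
  exact exists_congr fun _ => and_comm

/-- Each coincidence gets the duration of its partner in `D`. -/
lemma exists_forall₂_esetSub_matches {L : List (Finset α)} {D : List (Finset α × ℕ)}
    (h : List.Forall₂ (fun c σ => c ⊆ σ.1) L D) :
    ∃ C', List.Forall₂ EsetSub C' D ∧ Matches C' L := by
  induction h with
  | nil => exact ⟨[], .nil, rfl⟩
  | @cons c σ _ _ hc _ ih =>
    obtain ⟨C', hC', hM⟩ := ih
    exact ⟨(c, σ.2) :: C', .cons ⟨hc, rfl⟩ hC', congrArg (c :: ·) hM⟩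

lemma exists_csub_matches_iff {C : List (Finset α × ℕ)} {L : List (Finset α)} :
    (∃ C', CSub C' C ∧ Matches C' L) ↔ List.SublistForall₂ (· ⊆ ·) L (C.map Prod.fst) := by
  rw [List.sublistForall₂_map_right_iff, List.sublistForall₂_iff]
  constructor
  · rintro ⟨C', ⟨D, hD, hC'⟩, rfl⟩
    exact ⟨D, List.forall₂_map_left_iff.2 (hC'.imp fun _ _ h => h.1), hD⟩
  · rintro ⟨D, hL, hD⟩
    obtain ⟨C', hC', hM⟩ := exists_forall₂_esetSub_matches hL
    exact ⟨C', ⟨D, hD, hC'⟩, hM⟩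

lemma exists_csub_matches_of_lsub {C : List (Finset α × ℕ)} {L L' : List (Finset α)}
    (hL : LSub L L') (h : ∃ C', CSub C' C ∧ Matches C' L') :
    ∃ C', CSub C' C ∧ Matches C' L := by
  rw [exists_csub_matches_iff] at h ⊢
  exact _root_.trans (lsub_iff_sublistForall₂.1 hL) h

/-- The L-sequence downward closure property (LDCP). -/
theorem LWU_anti {p : α → ℝ} (hp : ∀ l, 0 ≤ p l) (δ : Finset (List (Finset α × ℕ))) (k : ℕ)
    {L L' : List (Finset α)} (hL : LSub L L') : LWU p δ k L' ≤ LWU p δ k L := by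
  refine Finset.sum_le_sum fun C _ => ?_
  split_ifs with h' h
  · exact le_rfl
  · exact absurd (exists_csub_matches_of_lsub hL h') h
  · exact umaxk_nonneg hp C k
  · exact le_rfl

theorem ldcp_coincident_concat_general (p : α → ℝ) (hp : ∀ l, 0 ≤ p l)
    (δ : Finset (List (Finset α × ℕ))) (k : ℕ)
    (a a' : Finset α) (ξ : ℝ) :
    LWU p δ k [a ∪ a'] ≤ LWU p δ k [a] ∧
    (LWU p δ k [a] < ξ → LWU p δ k [a ∪ a'] < ξ) := by
  have hle : LWU p δ k [a ∪ a'] ≤ LWU p δ k [a] :=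
    LWU_anti hp δ k ⟨[a ∪ a'], List.Sublist.refl _, .cons Finset.subset_union_left .nil⟩
  exact ⟨hle, hle.trans_lt⟩

/-- Coincident-concatenation corollary of LDCP: for `k ≥ 1`,
`LWU_k(⟨a ∪ a'⟩) ≤ LWU_k(⟨a⟩)`; hence if `⟨a⟩` is unpromising so is `⟨a ∪ a'⟩`. -/
theorem ldcp_coincident_concat (p : α → ℝ) (hp : ∀ l, 0 ≤ p l)
    (δ : Finset (List (Finset α × ℕ))) (k : ℕ) (hk : 1 ≤ k)
    (a a' : Finset α) (ξ : ℝ) :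
    LWU p δ k [a ∪ a'] ≤ LWU p δ k [a] ∧
    (LWU p δ k [a] < ξ → LWU p δ k [a ∪ a'] < ξ) :=
  ldcp_coincident_concat_general p hp δ k a a' ξ
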